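/- arXiv:1412.0537 — 2 statements merged into one kernel-verified Lean document; each statement's English description precedes it below -/
import Mathlib

section
/- A nondeterministic SST T is functional if and only if the biSST T ⊗ T is diagonal. -/
/-!
Runs of `T₁ ⊗ T₂` on `w` are exactly pairs of runs of `T₁` and `T₂` on `w`, and the substitution
of a product run acts on each copy of the variables as the corresponding component run does
(`pairSubst` commutes with composition). Hence `⟦T ⊗ T⟧` relates `w` to `(o₁, o₂)` iff `⟦T⟧`
relates `w` to both `o₁` and `o₂`, and both directions of the equivalence are immediate.
-/

namespace SSTPaper

/-- Homomorphic extension of a substitution, fixing output letters. -/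
def ext {X Γ : Type} (σ : X → List (Γ ⊕ X)) : List (Γ ⊕ X) → List (Γ ⊕ X) :=
  fun w => w.flatMap (Sum.elim (fun g => [Sum.inl g]) σ)

/-- Composition of substitutions: (σ1 σ2)(x) = σ̂1(σ2 x). -/
def comp {X Γ : Type} (σ1 σ2 : X → List (Γ ⊕ X)) : X → List (Γ ⊕ X) :=
  fun x => ext σ1 (σ2 x)

/-- The identity substitution. -/
def idSubst {X Γ : Type} : X → List (Γ ⊕ X) := fun x => [Sum.inr x]

end SSTPaper

namespace SSTPaper

/-- Erase variables and keep output letters, after applying σ to a variable word: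
    this computes σ_ε σ (xs). -/
def evalOut {X Γ : Type} (σ : X → List (Γ ⊕ X)) (xs : List X) : List Γ :=
  (xs.flatMap σ).filterMap (Sum.elim some (fun _ => none))

/-- Nondeterministic streaming string transducer. -/
structure NSST (S Γ Q X : Type) where
  init : Q
  final : Q → Prop
  delta : Q → S → Q → Prop
  rho : Q → S → Q → X → List (Γ ⊕ X)
  out : Q → List X

/-- Nondeterministic biSST: like an SST but outputs a pair of variable words. -/
structure BiSST (S Γ Q X : Type) where
  init : Q
  final : Q → Prop
  delta : Q → S → Q → Prop
  rho : Q → S → Q → X → List (Γ ⊕ X)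
  out : Q → List X × List X

/-- Runs of an SST, together with the induced substitution
    σ_r = ρ(t₁) ρ(t₂) ⋯ ρ(t_n) (left-to-right composition). -/
inductive Run {S Γ Q X : Type} (T : NSST S Γ Q X) :
    Q → List S → Q → (X → List (Γ ⊕ X)) → Prop
  | nil (q : Q) : Run T q [] q idSubst
  | cons {q q' q'' : Q} {a : S} {w : List S} {σ : X → List (Γ ⊕ X)} :
      T.delta q a q' → Run T q' w q'' σ →
      Run T q (a :: w) q'' (comp (T.rho q a q') σ)

/-- Runs of a biSST, with induced substitution. -/
inductive BiRun {S Γ Q X : Type} (T : BiSST S Γ Q X) :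
    Q → List S → Q → (X → List (Γ ⊕ X)) → Prop
  | nil (q : Q) : BiRun T q [] q idSubst
  | cons {q q' q'' : Q} {a : S} {w : List S} {σ : X → List (Γ ⊕ X)} :
      T.delta q a q' → BiRun T q' w q'' σ →
      BiRun T q (a :: w) q'' (comp (T.rho q a q') σ)

/-- The relation ⟦T⟧ ⊆ Σ* × Γ* defined by a nondeterministic SST. -/
def NSST.Rel {S Γ Q X : Type} (T : NSST S Γ Q X) (w : List S) (o : List Γ) : Prop :=
  ∃ q σ, Run T T.init w q σ ∧ T.final q ∧ o = evalOut σ (T.out q)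

/-- The relation defined by a biSST (input, pair of outputs). -/
def BiSST.Rel {S Γ Q X : Type} (T : BiSST S Γ Q X) (w : List S)
    (o : List Γ × List Γ) : Prop :=
  ∃ q σ, BiRun T T.init w q σ ∧ T.final q ∧
    o.1 = evalOut σ (T.out q).1 ∧ o.2 = evalOut σ (T.out q).2

/-- Domain of an SST. -/
def NSST.Dom {S Γ Q X : Type} (T : NSST S Γ Q X) : Set (List S) :=
  {w | ∃ o, T.Rel w o}

/-- Domain of a biSST. -/
def BiSST.Dom {S Γ Q X : Type} (T : BiSST S Γ Q X) : Set (List S) :=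
  {w | ∃ o, T.Rel w o}

/-- A biSST is diagonal if every output pair has equal components. -/
def BiSST.Diagonal {S Γ Q X : Type} (T : BiSST S Γ Q X) : Prop :=
  ∀ w o₁ o₂, T.Rel w (o₁, o₂) → o₁ = o₂

/-- A nondeterministic SST is functional if it defines a partial function. -/
def NSST.Functional {S Γ Q X : Type} (T : NSST S Γ Q X) : Prop :=
  ∀ w o₁ o₂, T.Rel w o₁ → T.Rel w o₂ → o₁ = o₂

/-- Determinism of a transition relation. -/
def DetRel {Q S : Type} (δ : Q → S → Q → Prop) : Prop :=
  ∀ q a q₁ q₂, δ q a q₁ → δ q a q₂ → q₁ = q₂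

/-- Rename variables inside a word over Γ ∪ X. -/
def mapV {Γ X X' : Type} (f : X → X') : List (Γ ⊕ X) → List (Γ ⊕ X') :=
  List.map (Sum.map id f)

/-- Synchronized product of two nondeterministic SSTs, as a biSST. -/
def prodSST {S Γ Q₁ Q₂ X₁ X₂ : Type} (T₁ : NSST S Γ Q₁ X₁) (T₂ : NSST S Γ Q₂ X₂) :
    BiSST S Γ (Q₁ × Q₂) (X₁ ⊕ X₂) where
  init := (T₁.init, T₂.init)
  final := fun p => T₁.final p.1 ∧ T₂.final p.2
  delta := fun p a p' => T₁.delta p.1 a p'.1 ∧ T₂.delta p.2 a p'.2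
  rho := fun p a p' =>
    Sum.elim (fun x₁ => mapV Sum.inl (T₁.rho p.1 a p'.1 x₁))
             (fun x₂ => mapV Sum.inr (T₂.rho p.2 a p'.2 x₂))
  out := fun p => ((T₁.out p.1).map Sum.inl, (T₂.out p.2).map Sum.inr)

end SSTPaper

namespace SSTPaper

section Substitutions

variable {Γ X X₁ X₂ X' : Type}

def pairSubst (σ₁ : X₁ → List (Γ ⊕ X₁)) (σ₂ : X₂ → List (Γ ⊕ X₂)) :
    X₁ ⊕ X₂ → List (Γ ⊕ (X₁ ⊕ X₂)) :=
  Sum.elim (fun x => mapV Sum.inl (σ₁ x)) (fun x => mapV Sum.inr (σ₂ x))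

lemma ext_mapV {f : X → X'} {σ : X → List (Γ ⊕ X)} {τ : X' → List (Γ ⊕ X')}
    (h : ∀ x, τ (f x) = mapV f (σ x)) (w : List (Γ ⊕ X)) :
    ext τ (mapV f w) = mapV f (ext σ w) := by
  simp only [ext, mapV, List.flatMap_map, List.map_flatMap]
  refine List.flatMap_congr fun a _ => ?_
  cases a with
  | inl g => rfl
  | inr x => exact h x

lemma filterMap_mapV (f : X → X') (l : List (Γ ⊕ X)) :
    (mapV f l).filterMap (Sum.elim some fun _ => none) =
      l.filterMap (Sum.elim some fun _ => none) := by
  rw [mapV, List.filterMap_map]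
  congr 1
  funext a
  cases a <;> rfl

lemma evalOut_map {f : X → X'} {σ : X → List (Γ ⊕ X)} {τ : X' → List (Γ ⊕ X')}
    (h : ∀ x, τ (f x) = mapV f (σ x)) (xs : List X) :
    evalOut τ (xs.map f) = evalOut σ xs := by
  have hflat : (xs.map f).flatMap τ = mapV f (xs.flatMap σ) := by
    simp only [List.flatMap_map, mapV, List.map_flatMap]
    exact List.flatMap_congr fun x _ => h x
  rw [evalOut, hflat, filterMap_mapV]
  rfl

lemma pairSubst_idSubst :
    pairSubst (idSubst : X₁ → List (Γ ⊕ X₁)) (idSubst : X₂ → List (Γ ⊕ X₂)) = idSubst := by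
  funext x
  cases x <;> rfl

lemma pairSubst_comp (ρ₁ σ₁ : X₁ → List (Γ ⊕ X₁)) (ρ₂ σ₂ : X₂ → List (Γ ⊕ X₂)) :
    comp (pairSubst ρ₁ ρ₂) (pairSubst σ₁ σ₂) = pairSubst (comp ρ₁ σ₁) (comp ρ₂ σ₂) := by
  funext x
  cases x with
  | inl x => exact ext_mapV (τ := pairSubst ρ₁ ρ₂) (σ := ρ₁) (fun _ => rfl) (σ₁ x)
  | inr x => exact ext_mapV (τ := pairSubst ρ₁ ρ₂) (σ := ρ₂) (fun _ => rfl) (σ₂ x)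

lemma evalOut_pairSubst_inl (σ₁ : X₁ → List (Γ ⊕ X₁)) (σ₂ : X₂ → List (Γ ⊕ X₂))
    (xs : List X₁) : evalOut (pairSubst σ₁ σ₂) (xs.map Sum.inl) = evalOut σ₁ xs :=
  evalOut_map (τ := pairSubst σ₁ σ₂) (σ := σ₁) (fun _ => rfl) xs

lemma evalOut_pairSubst_inr (σ₁ : X₁ → List (Γ ⊕ X₁)) (σ₂ : X₂ → List (Γ ⊕ X₂))
    (xs : List X₂) : evalOut (pairSubst σ₁ σ₂) (xs.map Sum.inr) = evalOut σ₂ xs :=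
  evalOut_map (τ := pairSubst σ₁ σ₂) (σ := σ₂) (fun _ => rfl) xs

end Substitutions

section Product

variable {S Γ Q₁ Q₂ X₁ X₂ : Type} (T₁ : NSST S Γ Q₁ X₁) (T₂ : NSST S Γ Q₂ X₂)

lemma biRun_prodSST_of_run {q₁ q₁' : Q₁} {q₂ q₂' : Q₂} {w : List S}
    {σ₁ : X₁ → List (Γ ⊕ X₁)} {σ₂ : X₂ → List (Γ ⊕ X₂)}
    (h₁ : Run T₁ q₁ w q₁' σ₁) (h₂ : Run T₂ q₂ w q₂' σ₂) :
    BiRun (prodSST T₁ T₂) (q₁, q₂) w (q₁', q₂') (pairSubst σ₁ σ₂) := by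
  induction h₁ generalizing q₂ σ₂ with
  | nil q =>
    cases h₂
    rw [pairSubst_idSubst]
    exact BiRun.nil _
  | cons hd₁ _ ih =>
    cases h₂ with
    | cons hd₂ hr₂ =>
      rw [← pairSubst_comp]
      exact BiRun.cons (T := prodSST T₁ T₂) ⟨hd₁, hd₂⟩ (ih hr₂)

lemma exists_run_of_biRun_prodSST {p p' : Q₁ × Q₂} {w : List S}
    {σ : X₁ ⊕ X₂ → List (Γ ⊕ (X₁ ⊕ X₂))} (h : BiRun (prodSST T₁ T₂) p w p' σ) :
    ∃ σ₁ σ₂, Run T₁ p.1 w p'.1 σ₁ ∧ Run T₂ p.2 w p'.2 σ₂ ∧ σ = pairSubst σ₁ σ₂ := by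
  induction h with
  | nil q => exact ⟨idSubst, idSubst, Run.nil _, Run.nil _, pairSubst_idSubst.symm⟩
  | cons hd _ ih =>
    obtain ⟨σ₁, σ₂, h₁, h₂, rfl⟩ := ih
    exact ⟨_, _, Run.cons hd.1 h₁, Run.cons hd.2 h₂, pairSubst_comp _ _ _ _⟩

lemma prodSST_rel_iff (w : List S) (o : List Γ × List Γ) :
    (prodSST T₁ T₂).Rel w o ↔ T₁.Rel w o.1 ∧ T₂.Rel w o.2 := by
  constructor
  · rintro ⟨q, σ, hr, ⟨hf₁, hf₂⟩, ho₁, ho₂⟩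
    obtain ⟨σ₁, σ₂, hr₁, hr₂, rfl⟩ := exists_run_of_biRun_prodSST T₁ T₂ hr
    exact ⟨⟨q.1, σ₁, hr₁, hf₁, ho₁.trans (evalOut_pairSubst_inl σ₁ σ₂ _)⟩,
      ⟨q.2, σ₂, hr₂, hf₂, ho₂.trans (evalOut_pairSubst_inr σ₁ σ₂ _)⟩⟩
  · rintro ⟨⟨q₁, σ₁, hr₁, hf₁, ho₁⟩, ⟨q₂, σ₂, hr₂, hf₂, ho₂⟩⟩
    exact ⟨(q₁, q₂), pairSubst σ₁ σ₂, biRun_prodSST_of_run T₁ T₂ hr₁ hr₂, ⟨hf₁, hf₂⟩,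
      ho₁.trans (evalOut_pairSubst_inl σ₁ σ₂ _).symm,
      ho₂.trans (evalOut_pairSubst_inr σ₁ σ₂ _).symm⟩

end Product

/-- A nondeterministic SST T is functional iff T ⊗ T is diagonal. -/
theorem functional_iff_diagonal {S Γ Q X : Type} (T : NSST S Γ Q X) :
    T.Functional ↔ (prodSST T T).Diagonal := by
  simp only [NSST.Functional, BiSST.Diagonal, prodSST_rel_iff, and_imp]

end SSTPaper
end

section
/- For any HDT0L instance I, the two SSTs T1, T2 constructed from I are equivalent if and only if I is valid, i.e., h(h_{i1}(… h_{ik}(v)…)) = g(g_{i1}(… g_{ik}(w)…)) for all finite sequences i1,…,ik over {1,…,n}. -/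
namespace SSTPaper

/-- Apply a monoid morphism (given by its action on letters) to a word. -/
def mapply {A B : Type} (f : A → List B) (w : List A) : List B := w.flatMap f

/-- Value h(h_{i₁}( … h_{i_k}(v) … )) of an HDT0L instance on an index sequence. -/
def hdtVal {A B : Type} {n : ℕ} (hs : Fin n → A → List A) (h : A → List B)
    (l : List (Fin n)) (v : List A) : List B :=
  mapply h (l.foldr (fun i w => mapply (hs i) w) v)

/-- Validity of an HDT0L instance. -/
def HDT0LValid {A B : Type} {n : ℕ} (hs gs : Fin n → A → List A)
    (h g : A → List B) (v w : List A) : Prop :=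
  ∀ l : List (Fin n), hdtVal hs h l v = hdtVal gs g l w

end SSTPaper

namespace SSTPaper

/-- The SST constructed from (one side of) an HDT0L instance:
    states q₀ = false, q₁ = true, input alphabet {0} ∪ {1,…,n} modeled as
    Option (Fin n) (none is the letter 0), variables X_a for a ∈ A. -/
def hdtSST {A B : Type} {n : ℕ} (hs : Fin n → A → List A) (h : A → List B)
    (v : List A) : NSST (Option (Fin n)) B Bool A where
  init := false
  final := fun q => q = true
  delta := fun q s q' =>
    (q = false ∧ s = none ∧ q' = true) ∨ (q = true ∧ (∃ i, s = some i) ∧ q' = true)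
  rho := fun _ s _ =>
    match s with
    | none => fun a => (h a).map Sum.inl
    | some i => fun a => (hs i a).map Sum.inr
  out := fun _ => v

end SSTPaper

/-!
The SST built from `(hs, h, v)` substitutes `X_a ↦ h(a)` on the letter `0` and `X_a ↦ h_i(a)`
(read over the variables) on a letter `i`, so the substitution induced by the run on
`0 i₁ ⋯ i_k` sends `X_a` to `h(h_{i₁}(⋯ h_{i_k}(a) ⋯))` and the output word `v` evaluates to
`hdtVal hs h [i₁, …, i_k] v`. Both SSTs thus compute functions on the common domain `0·{1,…,n}*`,
and such graphs coincide iff the functions agree everywhere.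
-/

theorem Function.Injective.forall_exists_graph_iff {L U O : Type*} {e : L → U}
    (he : Function.Injective e) (f g : L → O) :
    (∀ u o, (∃ l, u = e l ∧ o = f l) ↔ (∃ l, u = e l ∧ o = g l)) ↔ ∀ l, f l = g l := by
  constructor
  · intro hfg l
    obtain ⟨l', hl', hfg'⟩ := ((hfg (e l) (f l)).1 ⟨l, rfl, rfl⟩)
    rwa [he hl'.symm] at hfg'
  · intro hfg u o
    simp only [hfg]

namespace SSTPaper

section Substitution

variable {X Γ : Type}

theorem ext_map_inr (σ : X → List (Γ ⊕ X)) (xs : List X) :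
    ext σ (xs.map Sum.inr) = xs.flatMap σ := by
  simp [ext, List.flatMap_map]

theorem comp_map_inr (σ : X → List (Γ ⊕ X)) (f : X → List X) :
    comp σ (fun x => (f x).map Sum.inr) = fun x => (f x).flatMap σ :=
  funext fun x => ext_map_inr σ (f x)

theorem evalOut_map_inl (f : X → List Γ) (xs : List X) :
    evalOut (fun x => (f x).map Sum.inl) xs = xs.flatMap f := by
  simp [evalOut, List.filterMap_flatMap]

end Substitution

section HDT0L

variable {A B : Type} {n : ℕ}

/-- `hdtIter hs [i₁, …, i_k] u = h_{i₁}(⋯ h_{i_k}(u) ⋯)`. -/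
def hdtIter (hs : Fin n → A → List A) (l : List (Fin n)) (u : List A) : List A :=
  l.foldr (fun i w => mapply (hs i) w) u

theorem hdtIter_eq_flatMap (hs : Fin n → A → List A) (l : List (Fin n)) (u : List A) :
    hdtIter hs l u = u.flatMap fun a => hdtIter hs l [a] := by
  induction l with
  | nil => exact (List.flatMap_singleton' u).symm
  | cons i l ih =>
    simp only [hdtIter, List.foldr_cons] at ih ⊢
    rw [ih, mapply, List.flatMap_assoc]
    rfl

def iterSubst (hs : Fin n → A → List A) (l : List (Fin n)) : A → List (B ⊕ A) :=
  fun a => (hdtIter hs l [a]).map Sum.inr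

theorem iterSubst_nil (hs : Fin n → A → List A) :
    (iterSubst hs [] : A → List (B ⊕ A)) = idSubst :=
  rfl

theorem comp_rho_some_iterSubst (hs : Fin n → A → List A) (h : A → List B) (v : List A)
    (i : Fin n) (l : List (Fin n)) :
    comp ((hdtSST hs h v).rho true (some i) true) (iterSubst hs l) = iterSubst hs (i :: l) := by
  unfold iterSubst
  rw [comp_map_inr]
  funext a
  simp [hdtSST, hdtIter, mapply, List.map_flatMap]

theorem comp_rho_none_iterSubst (hs : Fin n → A → List A) (h : A → List B) (v : List A)
    (l : List (Fin n)) :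
    comp ((hdtSST hs h v).rho false none true) (iterSubst hs l) =
      fun a => (mapply h (hdtIter hs l [a])).map Sum.inl := by
  unfold iterSubst
  rw [comp_map_inr]
  funext a
  simp [hdtSST, mapply, List.map_flatMap]

theorem evalOut_comp_rho_none_iterSubst (hs : Fin n → A → List A) (h : A → List B)
    (v : List A) (l : List (Fin n)) :
    evalOut (comp ((hdtSST hs h v).rho false none true) (iterSubst hs l)) v = hdtVal hs h l v := by
  change _ = mapply h (hdtIter hs l v)
  rw [comp_rho_none_iterSubst, evalOut_map_inl, hdtIter_eq_flatMap hs l v, mapply,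
    List.flatMap_assoc]
  rfl

theorem run_true_iff (hs : Fin n → A → List A) (h : A → List B) (v : List A)
    (u : List (Option (Fin n))) (q : Bool) (σ : A → List (B ⊕ A)) :
    Run (hdtSST hs h v) true u q σ ↔
      ∃ l : List (Fin n), u = l.map some ∧ q = true ∧ σ = iterSubst hs l := by
  constructor
  · intro hr
    generalize hq₀ : true = q₀ at hr
    induction hr with
    | nil => exact ⟨[], rfl, rfl, iterSubst_nil hs⟩
    | cons hδ _ ih =>
      subst hq₀
      obtain ⟨-, ⟨i, rfl⟩, rfl⟩ := hδ.resolve_left (by simp)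
      obtain ⟨l, rfl, rfl, rfl⟩ := ih rfl
      exact ⟨i :: l, rfl, rfl, comp_rho_some_iterSubst hs h v i l⟩
  · rintro ⟨l, rfl, rfl, rfl⟩
    induction l with
    | nil => exact Run.nil true
    | cons i l ih =>
      rw [← comp_rho_some_iterSubst hs h v]
      exact Run.cons (Or.inr ⟨rfl, ⟨i, rfl⟩, rfl⟩) ih

theorem hdtSST_rel_iff (hs : Fin n → A → List A) (h : A → List B) (v : List A)
    (u : List (Option (Fin n))) (o : List B) :
    (hdtSST hs h v).Rel u o ↔
      ∃ l : List (Fin n), u = none :: l.map some ∧ o = hdtVal hs h l v := by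
  constructor
  · rintro ⟨q, σ, hr, hq, rfl⟩
    cases hr with
    | nil => simp [hdtSST] at hq
    | cons hδ hr =>
      obtain ⟨-, rfl, rfl⟩ := hδ.resolve_right (by simp [hdtSST])
      obtain ⟨l, rfl, -, rfl⟩ := (run_true_iff hs h v _ _ _).1 hr
      exact ⟨l, rfl, evalOut_comp_rho_none_iterSubst hs h v l⟩
  · rintro ⟨l, rfl, rfl⟩
    exact ⟨true, _, Run.cons (Or.inl ⟨rfl, rfl, rfl⟩)
      ((run_true_iff hs h v _ _ _).2 ⟨l, rfl, rfl, rfl⟩), rfl, (evalOut_comp_rho_none_iterSubst hs h v l).symm⟩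

end HDT0L

/-- The SSTs T₁ and T₂ built from an HDT0L instance are equivalent iff the
    instance is valid. -/
theorem hdtSST_equiv_iff_valid {A B : Type} {n : ℕ}
    (hs gs : Fin n → A → List A) (h g : A → List B) (v w : List A) :
    (∀ u o, (hdtSST hs h v).Rel u o ↔ (hdtSST gs g w).Rel u o) ↔
      HDT0LValid hs gs h g v w := by
  have hinj : Function.Injective fun l : List (Fin n) => (none :: l.map some) :=
    fun l l' hl => List.map_injective_iff.2 (Option.some_injective _) (List.cons.inj hl).2
  simp only [hdtSST_rel_iff]
  exact hinj.forall_exists_graph_iff _ _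

end SSTPaper
end
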